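/- Let P be the subgroup of U(8,ℂ) generated by {CX₀₁, CX₁₀, CX₁₂, CX₂₁, CCX₀, X₀} and CQ the subgroup generated by {X₁, CX₁₂, CX₂₁, X₀, CX₁₀, CX₂₀, CCX₀}. Then CQ is a subgroup of P of index 105. -/

import Mathlib

noncomputable section
open Matrix Complex

abbrev M8 := Matrix (Fin 8) (Fin 8) ℂ
abbrev U8 := Matrix.unitaryGroup (Fin 8) ℂ

namespace CCS

/-- qubit 0 (most significant bit) of a basis index. -/
def b0 (m : Fin 8) : ℕ := m.val / 4
def b1 (m : Fin 8) : ℕ := m.val / 2 % 2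
def b2 (m : Fin 8) : ℕ := m.val % 2

/-- basis index with qubit values `a`, `b`, `c` (mod 2). -/
def idx (a b c : ℕ) : Fin 8 := ⟨4 * (a % 2) + 2 * (b % 2) + c % 2, by omega⟩

/-- the permutation matrix sending `e_s` to `e_{σ s}`. -/
def permMat (σ : Fin 8 → Fin 8) : M8 := fun r s => if r = σ s then 1 else 0

def q0 (m : Fin 8) : Fin 2 := ⟨b0 m, by simp [b0]; omega⟩
def q1 (m : Fin 8) : Fin 2 := ⟨b1 m, by simp [b1]; omega⟩
def q2 (m : Fin 8) : Fin 2 := ⟨b2 m, by simp [b2]; omega⟩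

def Kmat : Matrix (Fin 2) (Fin 2) ℂ := (1 / (1 + I)) • !![1, 1; 1, -1]
def Smat : Matrix (Fin 2) (Fin 2) ℂ := !![1, 0; 0, I]

/-- `A ⊗ I₂ ⊗ I₂` -/
def K0 : M8 := fun r s => Kmat (q0 r) (q0 s) * (if q1 r = q1 s ∧ q2 r = q2 s then 1 else 0)
def K1 : M8 := fun r s => Kmat (q1 r) (q1 s) * (if q0 r = q0 s ∧ q2 r = q2 s then 1 else 0)
def K2 : M8 := fun r s => Kmat (q2 r) (q2 s) * (if q0 r = q0 s ∧ q1 r = q1 s then 1 else 0)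

def omega8 : M8 := Matrix.diagonal fun _ => I
def S0 : M8 := Matrix.diagonal fun m => I ^ b0 m
def S1 : M8 := Matrix.diagonal fun m => I ^ b1 m
def S2 : M8 := Matrix.diagonal fun m => I ^ b2 m
def CS01 : M8 := Matrix.diagonal fun m => I ^ (b0 m * b1 m)
def CS12 : M8 := Matrix.diagonal fun m => I ^ (b1 m * b2 m)
def CS02 : M8 := Matrix.diagonal fun m => I ^ (b0 m * b2 m)
def CCZ : M8 := Matrix.diagonal fun m => (-1 : ℂ) ^ (b0 m * b1 m * b2 m)

def X0 : M8 := permMat fun m => idx (b0 m + 1) (b1 m) (b2 m)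
def X1 : M8 := permMat fun m => idx (b0 m) (b1 m + 1) (b2 m)
def X2 : M8 := permMat fun m => idx (b0 m) (b1 m) (b2 m + 1)
def CX01 : M8 := permMat fun m => idx (b0 m) (b1 m + b0 m) (b2 m)
def CX10 : M8 := permMat fun m => idx (b0 m + b1 m) (b1 m) (b2 m)
def CX12 : M8 := permMat fun m => idx (b0 m) (b1 m) (b2 m + b1 m)
def CX21 : M8 := permMat fun m => idx (b0 m) (b1 m + b2 m) (b2 m)
def CX02 : M8 := permMat fun m => idx (b0 m) (b1 m) (b2 m + b0 m)
def CX20 : M8 := permMat fun m => idx (b0 m + b2 m) (b1 m) (b2 m)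
def CCX0 : M8 := permMat fun m => idx (b0 m + b1 m * b2 m) (b1 m) (b2 m)
def Swap01 : M8 := permMat fun m => idx (b1 m) (b0 m) (b2 m)
def Swap12 : M8 := permMat fun m => idx (b0 m) (b2 m) (b1 m)

/-- The ring ℤ[1/2, i]. -/
def Zhi : Subring ℂ := Subring.closure {1 / 2, I}

/-- The 3-qubit Clifford+CS group, as a subgroup of U(8,ℂ). -/
def CliffordCS3 : Subgroup U8 :=
  Subgroup.closure {u : U8 | (u : M8) ∈ ({omega8, K0, K1, K2, S0, S1, S2, CS01, CS12} : Set M8)}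

end CCS

noncomputable section
open CCS

/-- The subgroup `P = ⟨CX₀₁, CX₁₀, CX₁₂, CX₂₁, CCX₀, X₀⟩` of U(8,ℂ). -/
def Pgrp : Subgroup U8 :=
  Subgroup.closure {u : U8 | (u : M8) ∈ ({CX01, CX10, CX12, CX21, CCX0, X0} : Set M8)}

/-- The subgroup `CQ = ⟨X₁, CX₁₂, CX₂₁, X₀, CX₁₀, CX₂₀, CCX₀⟩` of U(8,ℂ). -/
def CQgrp : Subgroup U8 :=
  Subgroup.closure {u : U8 | (u : M8) ∈
    ({X1, CX12, CX21, X0, CX10, CX20, CCX0} : Set M8)}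

/-!
All the gates are permutation matrices, and sending a permutation to its matrix is an injective
homomorphism `S₈ → U(8)`, so the claim is one about the permutation groups generated by the gates.
The generators of `P` contain a transposition and generate an `8`-cycle through it, so `P ≅ S₈`.
Every generator of `CQ` commutes with the fixed-point-free involution `X₀`. Conversely `CQ`
contains the whole centralizer `C₂ ≀ S₄` of `X₀`: `X₁, CX₁₂, CX₂₁` induce all of `S₄` on
qubits 1, 2, and products of `X₀, CX₁₀, CX₂₀, CCX₀` flip qubit 0 under any Boolean condition on
qubits 1, 2. So `CQ` is the centralizer of `X₀`, of order `2⁴ · 4! = 384`, and its index in `S₈`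
is `8! / 384 = 105`.
-/

open Equiv Subgroup

theorem Equiv.toPEquiv_injective {α β : Type*} :
    Function.Injective (Equiv.toPEquiv : (α ≃ β) → (α ≃. β)) := fun f g h =>
  Equiv.ext fun x => Option.some_injective _ (by simpa using congr($h x))

namespace Matrix

variable {n R : Type*} [DecidableEq n] [Fintype n] [CommRing R] [StarRing R]

theorem permMatrix_mem_unitaryGroup (σ : Perm n) : σ.permMatrix R ∈ unitaryGroup n R := by
  rw [mem_unitaryGroup_iff', star_eq_conjTranspose, conjTranspose_permMatrix, ← permMatrix_mul,
    mul_inv_cancel, permMatrix_one]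

variable (n R) in
def permUnitaryHom : Perm n →* unitaryGroup n R :=
  (permMatrixHom (R := R)).codRestrict (unitaryGroup n R) fun σ => by
    rw [permMatrixHom_apply]
    exact permMatrix_mem_unitaryGroup σ⁻¹

theorem coe_permUnitaryHom (σ : Perm n) :
    (permUnitaryHom n R σ : Matrix n n R) = σ⁻¹.permMatrix R :=
  rfl

theorem permUnitaryHom_injective [Nontrivial R] : Function.Injective (permUnitaryHom n R) :=
  fun _ _ h => inv_injective <| toPEquiv_injective <| PEquiv.toMatrix_injective congr(($h).1)

end Matrix

namespace Equiv.Perm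

theorem subgroup_eq_top_of_isCycle {α : Type*} [Fintype α] [DecidableEq α]
    {H : Subgroup (Perm α)} {σ : Perm α} (hσ : σ.IsCycle) (hsupp : σ.support = Finset.univ)
    (x : α) (hσH : σ ∈ H) (hswap : swap x (σ x) ∈ H) : H = ⊤ := by
  rw [eq_top_iff, ← closure_cycle_adjacent_swap hσ hsupp x, closure_le]
  rintro g (rfl | rfl)
  exacts [hσH, hswap]

end Equiv.Perm

namespace CCS

open Matrix

theorem permMat_eq (σ : Perm (Fin 8)) : permMat ⇑σ = (permUnitaryHom (Fin 8) ℂ σ : M8) := by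
  ext r s
  simp [permMat, coe_permUnitaryHom, PEquiv.toMatrix_apply, Equiv.symm_apply_eq, @eq_comm _ r]

theorem closure_permMat_image (s : Set (Perm (Fin 8))) :
    Subgroup.closure {u : U8 | (u : M8) ∈ (fun σ : Perm (Fin 8) => permMat ⇑σ) '' s} =
      (Subgroup.closure s).map (permUnitaryHom (Fin 8) ℂ) := by
  rw [MonoidHom.map_closure]
  congr 1
  ext u
  simp only [Set.mem_ofPred_eq, Set.mem_image, permMat_eq, Subtype.ext_iff]

def σX0 : Perm (Fin 8) := Function.Involutive.toPerm (fun m => idx (b0 m + 1) (b1 m) (b2 m))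
  (by unfold Function.Involutive; decide)
def σX1 : Perm (Fin 8) := Function.Involutive.toPerm (fun m => idx (b0 m) (b1 m + 1) (b2 m))
  (by unfold Function.Involutive; decide)
def σCX01 : Perm (Fin 8) := Function.Involutive.toPerm (fun m => idx (b0 m) (b1 m + b0 m) (b2 m))
  (by unfold Function.Involutive; decide)
def σCX10 : Perm (Fin 8) := Function.Involutive.toPerm (fun m => idx (b0 m + b1 m) (b1 m) (b2 m))
  (by unfold Function.Involutive; decide)
def σCX12 : Perm (Fin 8) := Function.Involutive.toPerm (fun m => idx (b0 m) (b1 m) (b2 m + b1 m))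
  (by unfold Function.Involutive; decide)
def σCX21 : Perm (Fin 8) := Function.Involutive.toPerm (fun m => idx (b0 m) (b1 m + b2 m) (b2 m))
  (by unfold Function.Involutive; decide)
def σCX20 : Perm (Fin 8) := Function.Involutive.toPerm (fun m => idx (b0 m + b2 m) (b1 m) (b2 m))
  (by unfold Function.Involutive; decide)
def σCCX0 : Perm (Fin 8) :=
  Function.Involutive.toPerm (fun m => idx (b0 m + b1 m * b2 m) (b1 m) (b2 m))
    (by unfold Function.Involutive; decide)

def Pperm : Subgroup (Perm (Fin 8)) := closure {σCX01, σCX10, σCX12, σCX21, σCCX0, σX0}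

def CQperm : Subgroup (Perm (Fin 8)) := closure {σX1, σCX12, σCX21, σX0, σCX10, σCX20, σCCX0}

theorem Pgrp_eq_map : Pgrp = Pperm.map (permUnitaryHom (Fin 8) ℂ) := by
  rw [Pperm, ← closure_permMat_image]
  simp only [Set.image_insert_eq, Set.image_singleton]
  rfl

theorem CQgrp_eq_map : CQgrp = CQperm.map (permUnitaryHom (Fin 8) ℂ) := by
  rw [CQperm, ← closure_permMat_image]
  simp only [Set.image_insert_eq, Set.image_singleton]
  rfl

-- `CCX₀` is the transposition `(3 7)`, and the product below is an `8`-cycle sending `3` to `7`.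
theorem Pperm_eq_top : Pperm = ⊤ := by
  have hcycle : (σCX01 * σX0 * σCCX0 * σCX12 * σCX21).IsCycle :=
    Perm.card_cycleType_eq_one.mp (by decide)
  refine Perm.subgroup_eq_top_of_isCycle hcycle (by decide) 3 ?_ ?_
  · refine mul_mem (mul_mem (mul_mem (mul_mem ?_ ?_) ?_) ?_) ?_ <;> exact subset_closure (by simp)
  · rw [show swap 3 ((σCX01 * σX0 * σCCX0 * σCX12 * σCX21) 3) = σCCX0 by decide]
    exact subset_closure (by simp)

-- `coords (a, b) = 4 * a + b`: `a` is qubit 0 and `b = 2 * q₁ + q₂` encodes qubits 1 and 2.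
abbrev coords : Fin 2 × Fin 4 ≃ Fin 8 := finProdFinEquiv

def lowPerm : Perm (Fin 4) →* Perm (Fin 8) where
  toFun π := coords.permCongr ((Equiv.refl (Fin 2)).prodCongr π)
  map_one' := by ext; simp
  map_mul' π ρ := by
    ext
    simp only [permCongr_apply, prodCongr_apply, coe_refl, Perm.coe_mul, Function.comp_apply,
      symm_apply_apply]
    rfl

theorem lowPerm_coords (π : Perm (Fin 4)) (a : Fin 2) (b : Fin 4) :
    lowPerm π (coords (a, b)) = coords (a, π b) := by
  simp [lowPerm, permCongr_apply]

def flipHigh (f : Fin 4 → Fin 2) : Perm (Fin 8) :=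
  coords.permCongr <| Function.Involutive.toPerm (fun p => (p.1 + f p.2, p.2))
    fun _ => Prod.ext (by grind) rfl

theorem flipHigh_coords (f : Fin 4 → Fin 2) (a : Fin 2) (b : Fin 4) :
    flipHigh f (coords (a, b)) = coords (a + f b, b) := by
  rw [flipHigh, permCongr_apply, symm_apply_apply]
  rfl

theorem flipHigh_mul_lowPerm_injective :
    Function.Injective fun p : (Fin 4 → Fin 2) × Perm (Fin 4) => flipHigh p.1 * lowPerm p.2 := by
  rintro ⟨f, π⟩ ⟨g, ρ⟩ h
  have key (b : Fin 4) : f (π b) = g (ρ b) ∧ π b = ρ b := by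
    simpa [lowPerm_coords, flipHigh_coords] using congr($h (coords (0, b)))
  obtain rfl : π = ρ := Equiv.ext fun b => (key b).2
  obtain rfl : f = g := funext fun c => by
    obtain ⟨b, rfl⟩ := π.surjective c
    exact (key b).1
  rfl

theorem lowPerm_mem_CQperm (π : Perm (Fin 4)) : lowPerm π ∈ CQperm := by
  suffices CQperm.comap lowPerm = ⊤ by rw [← mem_comap, this]; exact mem_top π
  refine Perm.subgroup_eq_top_of_isCycle (σ := finRotate 4) isCycle_finRotate support_finRotate 2
    ?_ ?_
  · rw [mem_comap, show lowPerm (finRotate 4) = σCX21 * σCX12 * σX1 * σCX12 by decide]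
    refine mul_mem (mul_mem (mul_mem ?_ ?_) ?_) ?_ <;> exact subset_closure (by simp)
  · rw [mem_comap, show lowPerm (swap 2 (finRotate 4 2)) = σCX12 by decide]
    exact subset_closure (by simp)

-- The exponents are the coefficients of `f` in its algebraic normal form over `𝔽₂`.
theorem flipHigh_eq (f : Fin 4 → Fin 2) :
    flipHigh f = σX0 ^ (f 0).val * σCX10 ^ (f 2 - f 0).val * σCX20 ^ (f 1 - f 0).val *
      σCCX0 ^ (f 3 - f 2 - f 1 + f 0).val := by
  revert f
  decide

theorem flipHigh_mem_CQperm (f : Fin 4 → Fin 2) : flipHigh f ∈ CQperm := by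
  rw [flipHigh_eq]
  refine mul_mem (mul_mem (mul_mem ?_ ?_) ?_) ?_ <;> exact pow_mem (subset_closure (by simp)) _

theorem CQperm_le_centralizer : CQperm ≤ centralizer {σX0} := by
  rw [CQperm, closure_le]
  rintro g (rfl | rfl | rfl | rfl | rfl | rfl | rfl) <;>
    exact mem_centralizer_singleton_iff.2 (by decide)

theorem card_centralizer_σX0 : Nat.card (centralizer {σX0}) = 384 := by
  rw [Perm.nat_card_centralizer, show σX0.cycleType = {2, 2, 2, 2} by decide]
  decide

theorem CQperm_eq_centralizer : CQperm = centralizer {σX0} := by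
  refine eq_of_le_of_card_ge CQperm_le_centralizer ?_
  calc Nat.card (centralizer {σX0}) = Nat.card ((Fin 4 → Fin 2) × Perm (Fin 4)) := by
        rw [card_centralizer_σX0]; simp [Nat.card_eq_fintype_card, Fintype.card_perm, Nat.factorial]
    _ ≤ Nat.card CQperm :=
        Nat.card_le_card_of_injective
          (fun p => ⟨flipHigh p.1 * lowPerm p.2,
            mul_mem (flipHigh_mem_CQperm p.1) (lowPerm_mem_CQperm p.2)⟩)
          fun _ _ h => flipHigh_mul_lowPerm_injective congr(($h).1)

theorem index_CQperm : CQperm.index = 105 := by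
  have h := (centralizer {σX0}).index_mul_card
  rw [card_centralizer_σX0, Nat.card_perm, Nat.card_eq_fintype_card, Fintype.card_fin,
    show Nat.factorial 8 = 105 * 384 from rfl] at h
  rw [CQperm_eq_centralizer]
  exact Nat.eq_of_mul_eq_mul_right (by norm_num) h

end CCS

open CCS in
/-- `CQ` is a subgroup of `P` of index 105. -/
theorem CQ_index_in_P : CQgrp ≤ Pgrp ∧ CQgrp.relIndex Pgrp = 105 := by
  rw [Pgrp_eq_map, CQgrp_eq_map, Pperm_eq_top]
  refine ⟨map_mono le_top, ?_⟩
  rw [← relIndex_comap, comap_map_eq_self_of_injective Matrix.permUnitaryHom_injective,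
    relIndex_top_right, index_CQperm]
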